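/- arXiv:1408.2614 — 8 statements merged into one kernel-verified Lean document; each statement's English description precedes it below -/
import Mathlib

section
/- Let x̄ be a feasible point for problem (VP) and d ∈ ℝ^s a direction. Suppose all active constraint functions g_i, i ∈ I(x̄), are continuously differentiable on X and that the second-order directional derivative g_i''(x̄,d) exists for every i ∈ I(x̄) with ∇g_i(x̄)d = 0. Then A(x̄,d) ⊆ B(x̄,d). -/
/- A `C¹` function is strictly differentiable at `x`, so its increment between the two nearby
points `x + t d` and `x + t d + (t²/2) z` is `(t²/2) ∇f(x) z + o(t²)`; adding the expansion
`f(x + t d) = f(x) + t ∇f(x) d + (t²/2) f''(x,d) + o(t²)` gives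
`f(x + t d + (t²/2) z) = f(x) + t ∇f(x) d + (t²/2) (f''(x,d) + ∇f(x) z) + o(t²)`.
For an active constraint in `K(x,d)` the first two terms vanish, so if this is `≤ 0` for small
`t > 0` then `f''(x,d) + ∇f(x) z ≤ 0`. -/

open Set Filter Topology

noncomputable section

/-- The second-order directional derivative of `h` at `x` in direction `u` equals `D`:
`D = lim_{t→0+} 2 t⁻² [h(x+tu) − h(x) − t ∇h(x)u]`. -/
def HasDirDeriv2 {s : ℕ} (h : (Fin s → ℝ) → ℝ) (x u : Fin s → ℝ) (D : ℝ) : Prop :=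
  Filter.Tendsto (fun t : ℝ => 2 / t ^ 2 * (h (x + t • u) - h x - t * fderiv ℝ h x u))
    (𝓝[>] (0 : ℝ)) (𝓝 D)

/-- The set `A(x,d)`: `z` such that for every active index `i` with `∇g_i(x)d = 0`
(i.e. `i ∈ K(x,d)`) there is `δ > 0` with `g_i(x + td + 0.5 t² z) ≤ 0` for all `t ∈ (0,δ)`. -/
def setA {s : ℕ} (m : ℕ) (g : Fin m → (Fin s → ℝ) → ℝ) (x d : Fin s → ℝ) :
    Set (Fin s → ℝ) :=
  {z | ∀ i, g i x = 0 → fderiv ℝ (g i) x d = 0 →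
    ∃ δ > 0, ∀ t ∈ Ioo (0 : ℝ) δ, g i (x + t • d + (t ^ 2 / 2) • z) ≤ 0}

/-- The set `B(x,d)`: `z` such that `∇g_i(x)z + g_i''(x,d) ≤ 0` for every `i ∈ K(x,d)`,
where `gdd i` denotes the value `g_i''(x,d)`. -/
def setB {s : ℕ} (m : ℕ) (g : Fin m → (Fin s → ℝ) → ℝ) (x d : Fin s → ℝ)
    (gdd : Fin m → ℝ) : Set (Fin s → ℝ) :=
  {z | ∀ i, g i x = 0 → fderiv ℝ (g i) x d = 0 → fderiv ℝ (g i) x z + gdd i ≤ 0}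

open Asymptotics

theorem HasStrictFDerivAt.isLittleO_parabola_increment {E F : Type*}
    [NormedAddCommGroup E] [NormedSpace ℝ E] [NormedAddCommGroup F] [NormedSpace ℝ F]
    {f : E → F} {φ : E →L[ℝ] F} {x : E} (hf : HasStrictFDerivAt f φ x) (d z : E) :
    (fun t : ℝ => f (x + t • d + (t ^ 2 / 2) • z) - f (x + t • d) - (t ^ 2 / 2) • φ z)
      =o[𝓝 0] fun t => t ^ 2 := by
  have hcurve : Tendsto (fun t : ℝ => (x + t • d + (t ^ 2 / 2) • z, x + t • d)) (𝓝 0)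
      (𝓝 (x, x)) := by
    have hc : Continuous fun t : ℝ => (x + t • d + (t ^ 2 / 2) • z, x + t • d) := by fun_prop
    simpa using hc.tendsto 0
  have hgap : (fun t : ℝ => (t ^ 2 / 2) • z) =O[𝓝 0] fun t => t ^ 2 :=
    isBigO_of_le' (c := ‖z‖) _ fun t => by
      rw [norm_smul, norm_div, Real.norm_two, mul_comm]
      gcongr
      linarith [norm_nonneg (t ^ 2)]
  refine ((hf.isLittleO.comp_tendsto hcurve).trans_isBigO ?_).congr_left fun t => ?_
  · exact hgap.congr_left fun t => by simp
  · simp [Function.comp, map_smul]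

theorem HasStrictFDerivAt.tendsto_parabola_increment {E : Type*}
    [NormedAddCommGroup E] [NormedSpace ℝ E] {f : E → ℝ} {φ : E →L[ℝ] ℝ} {x : E}
    (hf : HasStrictFDerivAt f φ x) (d z : E) :
    Tendsto (fun t : ℝ => 2 / t ^ 2 * (f (x + t • d + (t ^ 2 / 2) • z) - f (x + t • d)))
      (𝓝[≠] 0) (𝓝 (φ z)) := by
  have hrem : Tendsto (fun t : ℝ => 2 * ((f (x + t • d + (t ^ 2 / 2) • z) - f (x + t • d)
      - (t ^ 2 / 2) • φ z) / t ^ 2) + φ z) (𝓝[≠] 0) (𝓝 (2 * 0 + φ z)) :=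
    ((hf.isLittleO_parabola_increment d z).tendsto_div_nhds_zero.mono_left
      nhdsWithin_le_nhds).const_mul 2 |>.add_const (φ z)
  rw [mul_zero, zero_add] at hrem
  refine hrem.congr' ?_
  filter_upwards [self_mem_nhdsWithin] with t (ht : t ≠ 0)
  simp only [smul_eq_mul]
  field_simp
  ring

theorem HasDirDeriv2.tendsto_parabola {s : ℕ} {f : (Fin s → ℝ) → ℝ} {x d : Fin s → ℝ} {D : ℝ}
    (hD : HasDirDeriv2 f x d D) (hf : HasStrictFDerivAt f (fderiv ℝ f x) x) (z : Fin s → ℝ) :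
    Tendsto (fun t : ℝ => 2 / t ^ 2 *
        (f (x + t • d + (t ^ 2 / 2) • z) - f x - t * fderiv ℝ f x d))
      (𝓝[>] 0) (𝓝 (D + fderiv ℝ f x z)) := by
  refine (hD.add ((hf.tendsto_parabola_increment d z).mono_left
    (nhdsWithin_mono _ fun t (ht : 0 < t) => ht.ne'))).congr fun t => ?_
  ring

theorem HasDirDeriv2.add_fderiv_nonpos_of_eventually_nonpos {s : ℕ} {f : (Fin s → ℝ) → ℝ}
    {x d z : Fin s → ℝ} {D : ℝ} (hD : HasDirDeriv2 f x d D)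
    (hf : HasStrictFDerivAt f (fderiv ℝ f x) x) (hx : f x = 0) (hd : fderiv ℝ f x d = 0)
    (hz : ∀ᶠ t : ℝ in 𝓝[>] 0, f (x + t • d + (t ^ 2 / 2) • z) ≤ 0) :
    fderiv ℝ f x z + D ≤ 0 := by
  rw [add_comm]
  refine le_of_tendsto (hD.tendsto_parabola hf z) ?_
  filter_upwards [hz] with t ht
  rw [hx, hd]
  nlinarith [div_nonneg zero_le_two (sq_nonneg t)]

theorem statement0_general {s m : ℕ} (X : Set (Fin s → ℝ)) (hX : IsOpen X)
    (g : Fin m → (Fin s → ℝ) → ℝ) (xbar d : Fin s → ℝ)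
    (hxX : xbar ∈ X)
    (hC1 : ∀ i, g i xbar = 0 → ContDiffOn ℝ 1 (g i) X)
    (gdd : Fin m → ℝ)
    (hgdd : ∀ i, g i xbar = 0 → fderiv ℝ (g i) xbar d = 0 →
      HasDirDeriv2 (g i) xbar d (gdd i)) :
    setA m g xbar d ⊆ setB m g xbar d gdd := by
  intro z hz i hi hdi
  have hstrict : HasStrictFDerivAt (g i) (fderiv ℝ (g i) xbar) xbar :=
    ((hC1 i hi).contDiffAt (hX.mem_nhds hxX)).hasStrictFDerivAt one_ne_zero
  obtain ⟨δ, hδ, hle⟩ := hz i hi hdi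
  refine (hgdd i hi hdi).add_fderiv_nonpos_of_eventually_nonpos hstrict hi hdi ?_
  filter_upwards [Ioo_mem_nhdsGT (show (0 : ℝ) < δ from hδ)] with t ht using hle t ht

/-- if `x̄` is feasible, the active constraints are continuously differentiable
on an open set `X`, and `g_i''(x̄,d)` exists for every `i ∈ K(x̄,d)`, then `A(x̄,d) ⊆ B(x̄,d)`. -/
theorem statement0 {s m : ℕ} (X : Set (Fin s → ℝ)) (hX : IsOpen X)
    (g : Fin m → (Fin s → ℝ) → ℝ) (xbar d : Fin s → ℝ)
    (hxX : xbar ∈ X) (hfeas : ∀ i, g i xbar ≤ 0)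
    (hC1 : ∀ i, g i xbar = 0 → ContDiffOn ℝ 1 (g i) X)
    (gdd : Fin m → ℝ)
    (hgdd : ∀ i, g i xbar = 0 → fderiv ℝ (g i) xbar d = 0 →
      HasDirDeriv2 (g i) xbar d (gdd i)) :
    setA m g xbar d ⊆ setB m g xbar d gdd :=
  statement0_general X hX g xbar d hxX hC1 gdd hgdd
end
end

section
/- Let X ⊆ ℝ^s be open, g : X → ℝ continuously differentiable, x̄ ∈ X, and d, z ∈ ℝ^s. Suppose the second-order directional derivative g''(x̄,d) exists. Define φ(t) := g(x̄ + td + 0.5t²z) for t in a neighborhood of 0. Then φ'(0) = ∇g(x̄)d and the second-order right derivative φ''(0,1) := lim_{t→0+} 2t^{-2}[φ(t) − φ(0) − tφ'(0)] exists and equals ∇g(x̄)z + g''(x̄,d). -/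
/-!
Split `φ(t) - g(x̄) - t ∇g(x̄) d` as `[g(x̄ + td + ½t²z) - g(x̄ + td)] + [g(x̄ + td) - g(x̄) - t ∇g(x̄) d]`.
After scaling by `2t⁻²`, the second bracket tends to `g''(x̄, d)` by hypothesis. As `g` is `C¹`, it
is strictly differentiable at `x̄`, which controls increments between two moving points: the first
bracket is `∇g(x̄)(½t²z) + o(t²)`, and contributes `∇g(x̄) z`.
-/

open Set Filter Topology

noncomputable section

open Asymptotics

section QuadraticCurve

variable {E F : Type*} [NormedAddCommGroup E] [NormedSpace ℝ E]
  [NormedAddCommGroup F] [NormedSpace ℝ F]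

theorem hasDerivAt_add_smul_add_sq_div_two_smul (x d z : E) :
    HasDerivAt (fun t : ℝ => x + t • d + (t ^ 2 / 2) • z) d 0 := by
  have hsq : HasDerivAt (fun t : ℝ => t ^ 2 / 2) 0 0 := by
    simpa using (hasDerivAt_pow 2 (0 : ℝ)).div_const 2
  convert (((hasDerivAt_id (0 : ℝ)).smul_const d).const_add x).add (hsq.smul_const z) using 1
  · rfl
  · simp

theorem HasStrictFDerivAt.isLittleO_curve_sub_line {g : E → F} {f : E →L[ℝ] F} {x : E}
    (hg : HasStrictFDerivAt g f x) (d z : E) :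
    (fun t : ℝ => g (x + t • d + (t ^ 2 / 2) • z) - g (x + t • d) - f ((t ^ 2 / 2) • z))
      =o[𝓝 0] fun t => t ^ 2 := by
  have hcurve : Tendsto (fun t : ℝ => x + t • d + (t ^ 2 / 2) • z) (𝓝 0) (𝓝 x) := by
    simpa using (hasDerivAt_add_smul_add_sq_div_two_smul x d z).continuousAt.tendsto
  have hline : Tendsto (fun t : ℝ => x + t • d) (𝓝 0) (𝓝 x) :=
    Continuous.tendsto' (by fun_prop) 0 x (by simp)
  have hO : (fun t : ℝ => (t ^ 2 / 2) • z) =O[𝓝 0] fun t => t ^ 2 :=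
    IsBigO.of_bound ‖z‖ (Eventually.of_forall fun t => by
      rw [norm_smul, mul_comm, norm_div, Real.norm_two]
      gcongr
      exact div_le_self (norm_nonneg _) one_le_two)
  have h := hg.isLittleO.comp_tendsto (hcurve.prodMk_nhds hline)
  simp only [Function.comp_def, add_sub_cancel_left] at h
  exact h.trans_isBigO hO

end QuadraticCurve

/-- for `g` continuously differentiable on the open set `X`, `x̄ ∈ X`, and
`φ(t) := g(x̄ + td + 0.5 t² z)`, one has `φ'(0) = ∇g(x̄)d` and the second-order right derivative
`φ''(0,1) = lim_{t→0+} 2 t⁻² [φ(t) − φ(0) − t φ'(0)]` exists and equals `∇g(x̄)z + g''(x̄,d)`. -/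
theorem statement1 {s : ℕ} (X : Set (Fin s → ℝ)) (hX : IsOpen X)
    (g : (Fin s → ℝ) → ℝ) (hg : ContDiffOn ℝ 1 g X)
    (xbar d z : Fin s → ℝ) (hx : xbar ∈ X)
    (D : ℝ) (hD : HasDirDeriv2 g xbar d D) :
    HasDerivAt (fun t : ℝ => g (xbar + t • d + (t ^ 2 / 2) • z)) (fderiv ℝ g xbar d) 0 ∧
    Filter.Tendsto
      (fun t : ℝ => 2 / t ^ 2 *
        (g (xbar + t • d + (t ^ 2 / 2) • z) - g xbar - t * fderiv ℝ g xbar d))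
      (𝓝[>] (0 : ℝ)) (𝓝 (fderiv ℝ g xbar z + D)) := by
  have hst : HasStrictFDerivAt g (fderiv ℝ g xbar) xbar :=
    (hg.contDiffAt (hX.mem_nhds hx)).hasStrictFDerivAt one_ne_zero
  refine ⟨hst.hasFDerivAt.comp_hasDerivAt_of_eq 0
    (hasDerivAt_add_smul_add_sq_div_two_smul xbar d z) (by simp), ?_⟩
  have hrem : Tendsto (fun t : ℝ => 2 / t ^ 2 * (g (xbar + t • d + (t ^ 2 / 2) • z)
      - g (xbar + t • d) - fderiv ℝ g xbar ((t ^ 2 / 2) • z))) (𝓝[>] 0) (𝓝 0) := by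
    have h := (hst.isLittleO_curve_sub_line d z).tendsto_div_nhds_zero.const_mul 2
    simp only [mul_zero] at h
    exact (h.mono_left nhdsWithin_le_nhds).congr fun t => by ring
  have hlin : ∀ᶠ t : ℝ in 𝓝[>] 0,
      fderiv ℝ g xbar z = 2 / t ^ 2 * fderiv ℝ g xbar ((t ^ 2 / 2) • z) := by
    filter_upwards [self_mem_nhdsWithin] with t (ht : 0 < t)
    rw [map_smul, smul_eq_mul]
    field_simp
  simpa using ((hrem.add (tendsto_const_nhds.congr' hlin)).add hD).congr fun t => by ring
end
end

section
/- Let g : ℝ² → ℝ be defined by g(x₁,x₂) = x₁³, consider the single constraint g(x) ≤ 0, let x̄ = (0,0) and d = (1,0). Then ∇g(x̄) = (0,0), g''(x̄,d) = 0, and the point z = (1,0) satisfies z ∈ B(x̄,d) but z ∉ A(x̄,d); in particular B(x̄,d) is not contained in A(x̄,d). -/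
/-!
Since `∇g(0) = 0` and `g''(0,d) = 0`, the linearised condition defining `B(0,d)` holds for every
`z`; but along the arc `t d + (t²/2) z` with `z = d` the constraint takes the value
`(t + t²/2)³ > 0`, so `z ∉ A(0,d)`.
-/

open Set Filter Topology

noncomputable section

section Constraints

variable {s m : ℕ} {g : Fin m → (Fin s → ℝ) → ℝ} {x d : Fin s → ℝ}

theorem mem_setB_of_fderiv_eq_zero {gdd : Fin m → ℝ}
    (hg : ∀ i, g i x = 0 → fderiv ℝ (g i) x = 0) (hgdd : ∀ i, gdd i ≤ 0) (z : Fin s → ℝ) :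
    z ∈ setB m g x d gdd := by
  intro i hi _
  simpa [hg i hi] using hgdd i

theorem notMem_setA_of_pos {z : Fin s → ℝ} (i : Fin m) (hi : g i x = 0)
    (hid : fderiv ℝ (g i) x d = 0)
    (hpos : ∀ t : ℝ, 0 < t → 0 < g i (x + t • d + (t ^ 2 / 2) • z)) :
    z ∉ setA m g x d := by
  intro hz
  obtain ⟨δ, hδ, hle⟩ := hz i hi hid
  exact (hpos (δ / 2) (by positivity)).not_ge (hle (δ / 2) ⟨by positivity, by linarith⟩)

end Constraints

section CoordinatePower

variable {s : ℕ} (i : Fin s) {n : ℕ}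

theorem fderiv_apply_pow_eq_zero (hn : 2 ≤ n) {x : Fin s → ℝ} (hx : x i = 0) :
    fderiv ℝ (fun y : Fin s → ℝ => y i ^ n) x = 0 := by
  rw [((hasFDerivAt_apply i x).pow n).fderiv, hx, zero_pow (by omega), smul_zero, zero_smul]

theorem hasDirDeriv2_apply_pow (hn : 3 ≤ n) (u : Fin s → ℝ) :
    HasDirDeriv2 (fun y : Fin s → ℝ => y i ^ n) 0 u 0 := by
  obtain ⟨k, rfl⟩ : ∃ k, n = k + 2 := ⟨n - 2, by omega⟩
  have hquot : ∀ t : ℝ, t ≠ 0 →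
      2 / t ^ 2 * (t * u i) ^ (k + 2) = 2 * u i ^ (k + 2) * t ^ k := by
    intro t ht
    field_simp
    ring
  have hlim : Tendsto (fun t : ℝ => 2 * u i ^ (k + 2) * t ^ k) (𝓝[>] 0) (𝓝 0) := by
    have := ((continuous_pow k).const_mul (2 * u i ^ (k + 2))).tendsto (0 : ℝ)
    rw [zero_pow (by omega), mul_zero] at this
    exact this.mono_left nhdsWithin_le_nhds
  refine hlim.congr' ?_
  filter_upwards [self_mem_nhdsWithin] with t (ht : 0 < t)
  simp [fderiv_apply_pow_eq_zero i (by omega : 2 ≤ k + 2) (x := 0) rfl, hquot t ht.ne']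

end CoordinatePower

/-- for the single constraint `g(x₁,x₂) = x₁³`, `x̄ = (0,0)`, `d = (1,0)`:
`∇g(x̄) = 0`, `g''(x̄,d) = 0`, and `z = (1,0)` lies in `B(x̄,d)` but not in `A(x̄,d)`;
in particular `B(x̄,d)` is not contained in `A(x̄,d)`. -/
theorem statement2 :
    fderiv ℝ (fun x : Fin 2 → ℝ => (x 0) ^ 3) (0 : Fin 2 → ℝ) = 0 ∧
    HasDirDeriv2 (fun x : Fin 2 → ℝ => (x 0) ^ 3) (0 : Fin 2 → ℝ) ![1, 0] 0 ∧
    (![1, 0] ∈ setB 1 (fun _ (x : Fin 2 → ℝ) => (x 0) ^ 3) 0 ![1, 0] (fun _ => 0) ∧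
     ![1, 0] ∉ setA 1 (fun _ (x : Fin 2 → ℝ) => (x 0) ^ 3) 0 ![1, 0]) ∧
    ¬ setB 1 (fun _ (x : Fin 2 → ℝ) => (x 0) ^ 3) 0 ![1, 0] (fun _ => 0) ⊆
        setA 1 (fun _ (x : Fin 2 → ℝ) => (x 0) ^ 3) 0 ![1, 0] := by
  have hgrad := fderiv_apply_pow_eq_zero (s := 2) 0 (n := 3) (by norm_num) (x := 0) rfl
  have hB : ![1, 0] ∈ setB 1 (fun _ (x : Fin 2 → ℝ) => (x 0) ^ 3) 0 ![1, 0] (fun _ => 0) :=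
    mem_setB_of_fderiv_eq_zero (fun _ _ => hgrad) (fun _ => le_rfl) _
  have hA : ![1, 0] ∉ setA 1 (fun _ (x : Fin 2 → ℝ) => (x 0) ^ 3) 0 ![1, 0] :=
    notMem_setA_of_pos 0 (by simp) (by simp [hgrad]) fun t ht => by
      simp only [zero_add, Pi.add_apply, Pi.smul_apply, Matrix.cons_val_zero, smul_eq_mul, mul_one]
      positivity
  exact ⟨hgrad, hasDirDeriv2_apply_pow 0 (by norm_num) _, ⟨hB, hA⟩, fun hBA => hA (hBA hB)⟩
end
end

section
/- Let x̄ be a feasible point for problem (VP) and d ∈ ℝ^s a direction. Suppose Conditions (C) hold, and suppose that for every z ∈ ℝ^s and every i ∈ K(x̄,d), the function of one variable φ_i(t) := g_i(x̄ + td + 0.5t²z) is second-order locally pseudoconcave at t = 0 on the right. Then A(x̄,d) = B(x̄,d). -/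
open Set Filter Topology

noncomputable section

/-- A function of one variable `φ`, differentiable at `0` with derivative `φ' = φ'(0)` and with
second-order right derivative `D = φ''(0,1)`, is second-order locally pseudoconcave at `t = 0`
on the right: there is `δ > 0` such that `φ(t) > φ(0)` for some `t ∈ (0,δ)` implies `φ'(0) ≥ 0`,
and `φ(t) > φ(0)` for some `t ∈ (0,δ)` together with `φ'(0) = 0` implies `φ''(0,1) > 0`. -/
def SOLocPseudoconcaveRight (φ : ℝ → ℝ) : Prop :=
  ∃ φ' D : ℝ, HasDerivAt φ φ' 0 ∧
    Filter.Tendsto (fun t : ℝ => 2 / t ^ 2 * (φ t - φ 0 - t * φ')) (𝓝[>] (0 : ℝ)) (𝓝 D) ∧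
    ∃ δ > (0 : ℝ), ((∃ t ∈ Ioo (0 : ℝ) δ, φ 0 < φ t) → 0 ≤ φ') ∧
      ((∃ t ∈ Ioo (0 : ℝ) δ, φ 0 < φ t) → φ' = 0 → 0 < D)

/-! Let `φ(t) = g(x̄ + t d + t²/2 z)` for an active constraint `g` with `∇g(x̄) d = 0`. Strict
differentiability of `g` at `x̄` makes the shift by `t²/2 z` cost `∇g(x̄)(t²/2 z) + o(t²)`, so
`2 t⁻² φ(t) → ∇g(x̄) z + g''(x̄,d)` as `t → 0+`. If `φ ≤ 0` near `0+` this limit is `≤ 0`, which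
gives `A ⊆ B`. Conversely, since `φ'(0) = ∇g(x̄) d = 0`, pseudoconcavity says that `φ(t) > 0` for
small `t > 0` would force the limit to be positive, which gives `B ⊆ A`. -/

open Asymptotics

lemma SOLocPseudoconcaveRight.exists_le_on_Ioo_of_tendsto_nonpos {φ : ℝ → ℝ}
    (hφ : SOLocPseudoconcaveRight φ) (hφ' : HasDerivAt φ 0 0) {L : ℝ}
    (hL : Tendsto (fun t : ℝ => 2 / t ^ 2 * (φ t - φ 0)) (𝓝[>] 0) (𝓝 L)) (hL0 : L ≤ 0) :
    ∃ δ > 0, ∀ t ∈ Ioo 0 δ, φ t ≤ φ 0 := by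
  obtain ⟨φ', D, hder, hD, δ, hδ, -, hpos⟩ := hφ
  obtain rfl : φ' = 0 := hder.unique hφ'
  obtain rfl : D = L := tendsto_nhds_unique (by simpa using hD) hL
  exact ⟨δ, hδ, fun t ht => not_lt.1 fun hlt => hL0.not_gt (hpos ⟨t, ht, hlt⟩ rfl)⟩

lemma nonpos_of_tendsto_of_le_on_Ioo {φ : ℝ → ℝ} {L δ : ℝ} (hδ : 0 < δ)
    (hle : ∀ t ∈ Ioo 0 δ, φ t ≤ φ 0)
    (hL : Tendsto (fun t : ℝ => 2 / t ^ 2 * (φ t - φ 0)) (𝓝[>] 0) (𝓝 L)) : L ≤ 0 := by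
  refine le_of_tendsto hL ?_
  filter_upwards [Ioo_mem_nhdsGT hδ] with t ht
  exact mul_nonpos_of_nonneg_of_nonpos (by positivity) (sub_nonpos.2 (hle t ht))

section Parabola

variable {E : Type*} [NormedAddCommGroup E] [NormedSpace ℝ E] {G : E → ℝ} {G' : E →L[ℝ] ℝ}
  {x d z : E}

lemma HasFDerivAt.hasDerivAt_comp_parabola (hG : HasFDerivAt G G' x) :
    HasDerivAt (fun t : ℝ => G (x + t • d + (t ^ 2 / 2) • z)) (G' d) 0 := by
  have hcurve : HasDerivAt (fun t : ℝ => x + t • d + (t ^ 2 / 2) • z) d 0 := by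
    have hline : HasDerivAt (fun t : ℝ => x + t • d) d 0 := by
      simpa using ((hasDerivAt_id (0 : ℝ)).smul_const d).const_add x
    have hquad : HasDerivAt (fun t : ℝ => (t ^ 2 / 2) • z) 0 0 := by
      simpa using ((hasDerivAt_pow 2 (0 : ℝ)).div_const 2).smul_const z
    have hsum := hline.add hquad
    rw [add_zero] at hsum
    exact hsum
  exact (by simpa using hG : HasFDerivAt G G' (x + (0 : ℝ) • d + ((0 : ℝ) ^ 2 / 2) • z))
    |>.comp_hasDerivAt 0 hcurve

lemma HasStrictFDerivAt.isLittleO_comp_parabola_sub_comp_line (hG : HasStrictFDerivAt G G' x) :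
    (fun t : ℝ => G (x + t • d + (t ^ 2 / 2) • z) - G (x + t • d) - t ^ 2 / 2 * G' z)
      =o[𝓝 0] fun t => t ^ 2 := by
  have hpair : Tendsto (fun t : ℝ => (x + t • d + (t ^ 2 / 2) • z, x + t • d)) (𝓝 0)
      (𝓝 (x, x)) := by
    have hcont : Continuous fun t : ℝ => (x + t • d + (t ^ 2 / 2) • z, x + t • d) := by
      fun_prop
    simpa using hcont.tendsto 0
  have hquad : (fun t : ℝ => (t ^ 2 / 2) • z) =O[𝓝 0] fun t => t ^ 2 :=
    .of_bound (‖z‖ / 2) <| .of_forall fun t => by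
      rw [norm_smul, Real.norm_eq_abs, Real.norm_eq_abs, abs_div, abs_two]
      exact le_of_eq (by ring)
  refine ((hG.isLittleO.comp_tendsto hpair).congr (fun t => ?_) (fun t => ?_)).trans_isBigO hquad
  · simp [add_sub_cancel_left, map_smul]
  · simp

lemma HasStrictFDerivAt.tendsto_second_order_quotient_comp_parabola
    (hG : HasStrictFDerivAt G G' x) {D : ℝ}
    (hD : Tendsto (fun t : ℝ => 2 / t ^ 2 * (G (x + t • d) - G x - t * G' d)) (𝓝[>] 0) (𝓝 D)) :
    Tendsto (fun t : ℝ => 2 / t ^ 2 * (G (x + t • d + (t ^ 2 / 2) • z) - G x - t * G' d))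
      (𝓝[>] 0) (𝓝 (G' z + D)) := by
  have hrem := (hG.isLittleO_comp_parabola_sub_comp_line (d := d) (z := z)).tendsto_div_nhds_zero
  have hsum := (((hrem.mono_left nhdsWithin_le_nhds).const_mul 2).add_const (G' z)).add hD
  rw [mul_zero, zero_add] at hsum
  refine hsum.congr' (eventually_nhdsWithin_of_forall fun t (ht : 0 < t) => ?_)
  field_simp
  ring

lemma exists_comp_parabola_nonpos_iff (hG : HasStrictFDerivAt G G' x) (hx : G x = 0)
    (hd : G' d = 0) {D : ℝ}
    (hD : Tendsto (fun t : ℝ => 2 / t ^ 2 * (G (x + t • d) - G x - t * G' d)) (𝓝[>] 0) (𝓝 D))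
    (hpc : SOLocPseudoconcaveRight fun t : ℝ => G (x + t • d + (t ^ 2 / 2) • z)) :
    (∃ δ > (0 : ℝ), ∀ t ∈ Ioo 0 δ, G (x + t • d + (t ^ 2 / 2) • z) ≤ 0) ↔ G' z + D ≤ 0 := by
  set φ := fun t : ℝ => G (x + t • d + (t ^ 2 / 2) • z)
  have hφ0 : φ 0 = 0 := by simp [φ, hx]
  have hφ' : HasDerivAt φ 0 0 := hd ▸ hG.hasFDerivAt.hasDerivAt_comp_parabola (d := d) (z := z)
  have hL : Tendsto (fun t => 2 / t ^ 2 * (φ t - φ 0)) (𝓝[>] 0) (𝓝 (G' z + D)) := by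
    simpa [hφ0, hx, hd] using hG.tendsto_second_order_quotient_comp_parabola (z := z) hD
  constructor
  · rintro ⟨δ, hδ, hle⟩
    exact nonpos_of_tendsto_of_le_on_Ioo hδ (fun t ht => (hle t ht).trans_eq hφ0.symm) hL
  · intro hL0
    simpa only [hφ0] using hpc.exists_le_on_Ioo_of_tendsto_nonpos hφ' hL hL0

end Parabola

theorem statement3_general {s m : ℕ} (X : Set (Fin s → ℝ)) (hX : IsOpen X)
    (g : Fin m → (Fin s → ℝ) → ℝ)
    (xbar d : Fin s → ℝ) (hxX : xbar ∈ X)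
    -- Conditions (C):
    (hgC1 : ∀ i, g i xbar = 0 → ContDiffOn ℝ 1 (g i) X)
    (gdd : Fin m → ℝ)
    (hgdd : ∀ i, g i xbar = 0 → fderiv ℝ (g i) xbar d = 0 →
      HasDirDeriv2 (g i) xbar d (gdd i))
    -- second-order local pseudoconcavity of the φ_i:
    (hpc : ∀ z : Fin s → ℝ, ∀ i, g i xbar = 0 → fderiv ℝ (g i) xbar d = 0 →
      SOLocPseudoconcaveRight (fun t : ℝ => g i (xbar + t • d + (t ^ 2 / 2) • z))) :
    setA m g xbar d = setB m g xbar d gdd := by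
  ext z
  refine forall_congr' fun i => forall_congr' fun hi => forall_congr' fun hid => ?_
  have hG := ((hgC1 i hi).contDiffAt (hX.mem_nhds hxX)).hasStrictFDerivAt one_ne_zero
  exact exists_comp_parabola_nonpos_iff hG hi hid (hgdd i hi hid) (hpc z i hi hid)

/-- under Conditions (C), if for every `z` and every `i ∈ K(x̄,d)` the function
`φ_i(t) = g_i(x̄ + td + 0.5 t² z)` is second-order locally pseudoconcave at `t = 0` on the
right, then `A(x̄,d) = B(x̄,d)`. -/
theorem statement3 {s n m : ℕ} (X : Set (Fin s → ℝ)) (hX : IsOpen X)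
    (f : Fin n → (Fin s → ℝ) → ℝ) (g : Fin m → (Fin s → ℝ) → ℝ)
    (xbar d : Fin s → ℝ) (hxX : xbar ∈ X) (hfeas : ∀ i, g i xbar ≤ 0)
    -- Conditions (C):
    (hCont : ∀ i, g i xbar ≠ 0 → ContinuousAt (g i) xbar)
    (hfC1 : ∀ j, ContDiffOn ℝ 1 (f j) X)
    (hgC1 : ∀ i, g i xbar = 0 → ContDiffOn ℝ 1 (g i) X)
    (fdd : Fin n → ℝ) (gdd : Fin m → ℝ)
    (hfdd : ∀ j, fderiv ℝ (f j) xbar d = 0 → HasDirDeriv2 (f j) xbar d (fdd j))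
    (hgdd : ∀ i, g i xbar = 0 → fderiv ℝ (g i) xbar d = 0 →
      HasDirDeriv2 (g i) xbar d (gdd i))
    -- second-order local pseudoconcavity of the φ_i:
    (hpc : ∀ z : Fin s → ℝ, ∀ i, g i xbar = 0 → fderiv ℝ (g i) xbar d = 0 →
      SOLocPseudoconcaveRight (fun t : ℝ => g i (xbar + t • d + (t ^ 2 / 2) • z))) :
    setA m g xbar d = setB m g xbar d gdd :=
  statement3_general X hX g xbar d hxX hgC1 gdd hgdd hpc
end
end

section
/- (Primal second-order necessary conditions.) Let x̄ be a weak local Pareto minimizer of problem (VP) and let d be a critical direction at x̄. Suppose Conditions (C) are satisfied and that the second-order Zangwill constraint qualification cl(A(x̄,d)) = B(x̄,d) holds. Then there is no vector z ∈ ℝ^s such that ∇f_j(x̄)z + f_j''(x̄,d) < 0 for all j ∈ J(x̄,d) and ∇g_i(x̄)z + g_i''(x̄,d) ≤ 0 for all i ∈ K(x̄,d). -/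
/-!
Argue by contradiction from such a `z`. Since `z ∈ B(x̄,d) = cl A(x̄,d)` and the strict
inequalities on the objectives define an open set, they also hold at some `w ∈ A(x̄,d)`.
Along the arc `x̄ + t d + (t²/2) w`, for small `t > 0` every constraint stays satisfied
(inactive ones by continuity, active ones with `∇gᵢ(x̄)d < 0` by first-order decrease, those
in `K(x̄,d)` because `w ∈ A(x̄,d)`) and every objective strictly decreases: at first order if
`∇fⱼ(x̄)d < 0`, and otherwise because
`fⱼ(x̄ + t d + (t²/2) w) - fⱼ(x̄) = (t²/2) (∇fⱼ(x̄)w + fⱼ''(x̄,d)) + o(t²)`.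
This contradicts weak local Pareto minimality.
-/

open Set Filter Topology

noncomputable section

lemma eventually_lt_of_tendsto_mul_sub {l : Filter ℝ} {w φ : ℝ → ℝ} {a D : ℝ}
    (hw : ∀ᶠ t in l, 0 < w t) (h : Tendsto (fun t => w t * (φ t - a)) l (𝓝 D))
    (hD : D < 0) : ∀ᶠ t in l, φ t < a := by
  filter_upwards [hw, h.eventually (eventually_lt_nhds hD)] with t hwt ht
  exact sub_neg.1 (neg_of_mul_neg_right ht hwt.le)

lemma eventually_lt_of_hasDerivAt_neg {φ : ℝ → ℝ} {D : ℝ} (hφ : HasDerivAt φ D 0)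
    (hD : D < 0) : ∀ᶠ t in 𝓝[>] 0, φ t < φ 0 := by
  refine eventually_lt_of_tendsto_mul_sub (w := fun t => t⁻¹) ?_ ?_ hD
  · filter_upwards [self_mem_nhdsWithin] with t (ht : 0 < t) using inv_pos.2 ht
  · simpa using hφ.tendsto_slope_zero_right

section ParabolicArc

variable {E : Type*} [NormedAddCommGroup E] [NormedSpace ℝ E]

def parabolicArc (x d z : E) (t : ℝ) : E := x + t • d + (t ^ 2 / 2) • z

@[simp]
lemma parabolicArc_zero (x d z : E) : parabolicArc x d z 0 = x := by
  simp [parabolicArc]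

lemma continuous_parabolicArc (x d z : E) : Continuous (parabolicArc x d z) := by
  unfold parabolicArc
  fun_prop

lemma tendsto_parabolicArc_nhdsGT (x d z : E) :
    Tendsto (parabolicArc x d z) (𝓝[>] 0) (𝓝 x) := by
  simpa using ((continuous_parabolicArc x d z).tendsto 0).mono_left nhdsWithin_le_nhds

lemma hasDerivAt_parabolicArc (x d z : E) : HasDerivAt (parabolicArc x d z) d 0 := by
  have h := (((hasDerivAt_id (0 : ℝ)).smul_const d).add
    (((hasDerivAt_pow 2 (0 : ℝ)).div_const 2).smul_const z)).const_add x
  convert h using 1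
  · ext t
    simp [parabolicArc, add_assoc]
  · simp

lemma HasFDerivAt.eventually_lt_parabolicArc {φ : E → ℝ} {L : E →L[ℝ] ℝ} {x d : E}
    (hφ : HasFDerivAt φ L x) (hd : L d < 0) (z : E) :
    ∀ᶠ t in 𝓝[>] 0, φ (parabolicArc x d z t) < φ x := by
  have h : HasDerivAt (φ ∘ parabolicArc x d z) (L d) 0 := by
    refine HasFDerivAt.comp_hasDerivAt 0 ?_ (hasDerivAt_parabolicArc x d z)
    rwa [parabolicArc_zero]
  simpa using eventually_lt_of_hasDerivAt_neg h hd

lemma HasStrictFDerivAt.isLittleO_parabolicArc {φ : E → ℝ} {L : E →L[ℝ] ℝ} {x : E}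
    (hφ : HasStrictFDerivAt φ L x) (d z : E) :
    (fun t : ℝ => φ (parabolicArc x d z t) - φ (x + t • d) - t ^ 2 / 2 * L z)
      =o[𝓝 0] fun t => t ^ 2 := by
  have hpair :
      Tendsto (fun t : ℝ => (parabolicArc x d z t, x + t • d)) (𝓝 0) (𝓝 (x, x)) := by
    refine Continuous.tendsto' ?_ 0 _ (by simp)
    exact (continuous_parabolicArc x d z).prodMk (by fun_prop)
  have hstep : (fun t : ℝ => (t ^ 2 / 2) • z) =O[𝓝 0] fun t => t ^ 2 :=
    .of_bound (‖z‖ / 2) <| .of_forall fun t => by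
      rw [norm_smul, Real.norm_eq_abs, Real.norm_eq_abs, abs_div, abs_two]
      exact le_of_eq (by ring)
  have hdiff (t : ℝ) : parabolicArc x d z t - (x + t • d) = (t ^ 2 / 2) • z := by
    simp [parabolicArc]
  refine ((hφ.isLittleO.comp_tendsto hpair).trans_isBigO
    (hstep.congr_left fun t => (hdiff t).symm)).congr_left fun t => ?_
  simp only [Function.comp_apply, hdiff, map_smul, smul_eq_mul]

end ParabolicArc

section SecondOrder

variable {s : ℕ} {φ : (Fin s → ℝ) → ℝ} {x d z : Fin s → ℝ} {D : ℝ}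

lemma HasDirDeriv2.tendsto_parabolicArc (hD : HasDirDeriv2 φ x d D)
    (hφ : HasStrictFDerivAt φ (fderiv ℝ φ x) x) (hd : fderiv ℝ φ x d = 0) :
    Tendsto (fun t => 2 / t ^ 2 * (φ (parabolicArc x d z t) - φ x)) (𝓝[>] 0)
      (𝓝 (fderiv ℝ φ x z + D)) := by
  have hrem := (hφ.isLittleO_parabolicArc d z).tendsto_div_nhds_zero.mono_left
    (nhdsWithin_le_nhds (s := Ioi 0))
  have hdir :
      Tendsto (fun t : ℝ => 2 / t ^ 2 * (φ (x + t • d) - φ x)) (𝓝[>] 0) (𝓝 D) := by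
    simpa [HasDirDeriv2, hd] using hD
  have h := ((hrem.const_mul 2).add hdir).add_const (fderiv ℝ φ x z)
  rw [mul_zero, zero_add, add_comm D] at h
  refine h.congr' ?_
  filter_upwards [self_mem_nhdsWithin] with t (ht : 0 < t)
  field_simp
  ring

lemma HasDirDeriv2.eventually_lt_parabolicArc (hD : HasDirDeriv2 φ x d D)
    (hφ : HasStrictFDerivAt φ (fderiv ℝ φ x) x) (hd : fderiv ℝ φ x d = 0)
    (hz : fderiv ℝ φ x z + D < 0) : ∀ᶠ t in 𝓝[>] 0, φ (parabolicArc x d z t) < φ x := by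
  refine eventually_lt_of_tendsto_mul_sub ?_ (hD.tendsto_parabolicArc hφ hd) hz
  filter_upwards [self_mem_nhdsWithin] with t (ht : 0 < t)
  positivity

lemma eventually_lt_parabolicArc_of_critical (hφ : HasStrictFDerivAt φ (fderiv ℝ φ x) x)
    (hd : fderiv ℝ φ x d ≤ 0) (hD : fderiv ℝ φ x d = 0 → HasDirDeriv2 φ x d D)
    (hz : fderiv ℝ φ x d = 0 → fderiv ℝ φ x z + D < 0) :
    ∀ᶠ t in 𝓝[>] 0, φ (parabolicArc x d z t) < φ x := by
  rcases hd.lt_or_eq with hlt | heq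
  · exact hφ.hasFDerivAt.eventually_lt_parabolicArc hlt z
  · exact (hD heq).eventually_lt_parabolicArc hφ heq (hz heq)

end SecondOrder

lemma eventually_feasible_parabolicArc {s m : ℕ} {g : Fin m → (Fin s → ℝ) → ℝ}
    {x d z : Fin s → ℝ} (hfeas : ∀ i, g i x ≤ 0)
    (hcrit : ∀ i, g i x = 0 → fderiv ℝ (g i) x d ≤ 0)
    (hcont : ∀ i, g i x ≠ 0 → ContinuousAt (g i) x)
    (hdiff : ∀ i, g i x = 0 → DifferentiableAt ℝ (g i) x) (hz : z ∈ setA m g x d) :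
    ∀ᶠ t in 𝓝[>] 0, ∀ i, g i (parabolicArc x d z t) ≤ 0 := by
  refine eventually_all.2 fun i => ?_
  by_cases hi : g i x = 0
  · rcases (hcrit i hi).lt_or_eq with hlt | heq
    · filter_upwards [(hdiff i hi).hasFDerivAt.eventually_lt_parabolicArc hlt z] with t ht
      exact (hi ▸ ht).le
    · obtain ⟨δ, hδ, hA⟩ := hz i hi heq
      filter_upwards [Ioo_mem_nhdsGT hδ] with t ht using hA t ht
  · have hlim := (hcont i hi).tendsto.comp (tendsto_parabolicArc_nhdsGT x d z)
    filter_upwards [hlim.eventually (eventually_lt_nhds ((hfeas i).lt_of_ne hi))] with t ht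
    exact ht.le

lemma exists_mem_forall_lt_zero_of_mem_closure {E ι : Type*} [TopologicalSpace E] [Finite ι]
    {S : Set E} {F : ι → E → ℝ} {P : ι → Prop} {z : E} (hF : ∀ j, Continuous (F j))
    (hz : z ∈ closure S) (hzF : ∀ j, P j → F j z < 0) :
    ∃ w ∈ S, ∀ j, P j → F j w < 0 := by
  have hev : ∀ᶠ w in 𝓝 z, ∀ j, P j → F j w < 0 := eventually_all.2 fun j => by
    by_cases hj : P j
    · exact ((hF j).continuousAt.eventually_lt continuousAt_const (hzF j hj)).mono
        fun _ h _ => h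
    · exact .of_forall fun _ h => absurd h hj
  exact ((mem_closure_iff_frequently.1 hz).and_eventually hev).exists

theorem statement5_general {s n m : ℕ} (X : Set (Fin s → ℝ)) (hX : IsOpen X)
    (f : Fin n → (Fin s → ℝ) → ℝ) (g : Fin m → (Fin s → ℝ) → ℝ)
    (xbar d : Fin s → ℝ) (hxX : xbar ∈ X) (hfeas : ∀ i, g i xbar ≤ 0)
    -- weak local Pareto minimizer
    (hmin : ∃ U ∈ 𝓝 xbar, ∀ y ∈ U, y ∈ X → (∀ i, g i y ≤ 0) → ¬ ∀ j, f j y < f j xbar)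
    -- d is a critical direction
    (hcritf : ∀ j, fderiv ℝ (f j) xbar d ≤ 0)
    (hcritg : ∀ i, g i xbar = 0 → fderiv ℝ (g i) xbar d ≤ 0)
    -- Conditions (C)
    (hCont : ∀ i, g i xbar ≠ 0 → ContinuousAt (g i) xbar)
    (hfC1 : ∀ j, ContDiffOn ℝ 1 (f j) X)
    (hgC1 : ∀ i, g i xbar = 0 → ContDiffOn ℝ 1 (g i) X)
    (fdd : Fin n → ℝ) (gdd : Fin m → ℝ)
    (hfdd : ∀ j, fderiv ℝ (f j) xbar d = 0 → HasDirDeriv2 (f j) xbar d (fdd j))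
    -- second-order Zangwill constraint qualification
    (hCQ : closure (setA m g xbar d) = setB m g xbar d gdd) :
    ¬ ∃ z : Fin s → ℝ,
      (∀ j, fderiv ℝ (f j) xbar d = 0 → fderiv ℝ (f j) xbar z + fdd j < 0) ∧
      (∀ i, g i xbar = 0 → fderiv ℝ (g i) xbar d = 0 →
        fderiv ℝ (g i) xbar z + gdd i ≤ 0) := by
  rintro ⟨z, hzf, hzg⟩
  have hXnhds : X ∈ 𝓝 xbar := hX.mem_nhds hxX
  have hzA : z ∈ closure (setA m g xbar d) := hCQ ▸ hzg
  obtain ⟨w, hwA, hwf⟩ := exists_mem_forall_lt_zero_of_mem_closure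
    (F := fun j w => fderiv ℝ (f j) xbar w + fdd j) (fun j => by fun_prop) hzA hzf
  have hfeasible := eventually_feasible_parabolicArc hfeas hcritg hCont
    (fun i hi => ((hgC1 i hi).contDiffAt hXnhds).differentiableAt one_ne_zero) hwA
  have hdecrease : ∀ᶠ t in 𝓝[>] 0, ∀ j, f j (parabolicArc xbar d w t) < f j xbar :=
    eventually_all.2 fun j => eventually_lt_parabolicArc_of_critical
      (((hfC1 j).contDiffAt hXnhds).hasStrictFDerivAt one_ne_zero) (hcritf j) (hfdd j) (hwf j)
  obtain ⟨U, hU, hUmin⟩ := hmin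
  have harc := tendsto_parabolicArc_nhdsGT xbar d w
  obtain ⟨t, htU, htX, htg, htf⟩ := ((harc.eventually_mem hU).and
    ((harc.eventually_mem hXnhds).and (hfeasible.and hdecrease))).exists
  exact hUmin _ htU htX htg htf

/-- primal second-order necessary conditions: if `x̄` is a weak local Pareto
minimizer of (VP), `d` is a critical direction, Conditions (C) hold, and the second-order
Zangwill constraint qualification `cl(A(x̄,d)) = B(x̄,d)` holds, then there is no `z` with
`∇f_j(x̄)z + f_j''(x̄,d) < 0` for all `j ∈ J(x̄,d)` and
`∇g_i(x̄)z + g_i''(x̄,d) ≤ 0` for all `i ∈ K(x̄,d)`. -/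
theorem statement5 {s n m : ℕ} (X : Set (Fin s → ℝ)) (hX : IsOpen X)
    (f : Fin n → (Fin s → ℝ) → ℝ) (g : Fin m → (Fin s → ℝ) → ℝ)
    (xbar d : Fin s → ℝ) (hxX : xbar ∈ X) (hfeas : ∀ i, g i xbar ≤ 0)
    -- weak local Pareto minimizer
    (hmin : ∃ U ∈ 𝓝 xbar, ∀ y ∈ U, y ∈ X → (∀ i, g i y ≤ 0) → ¬ ∀ j, f j y < f j xbar)
    -- d is a critical direction
    (hcritf : ∀ j, fderiv ℝ (f j) xbar d ≤ 0)
    (hcritg : ∀ i, g i xbar = 0 → fderiv ℝ (g i) xbar d ≤ 0)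
    -- Conditions (C)
    (hCont : ∀ i, g i xbar ≠ 0 → ContinuousAt (g i) xbar)
    (hfC1 : ∀ j, ContDiffOn ℝ 1 (f j) X)
    (hgC1 : ∀ i, g i xbar = 0 → ContDiffOn ℝ 1 (g i) X)
    (fdd : Fin n → ℝ) (gdd : Fin m → ℝ)
    (hfdd : ∀ j, fderiv ℝ (f j) xbar d = 0 → HasDirDeriv2 (f j) xbar d (fdd j))
    (hgdd : ∀ i, g i xbar = 0 → fderiv ℝ (g i) xbar d = 0 →
      HasDirDeriv2 (g i) xbar d (gdd i))
    -- second-order Zangwill constraint qualification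
    (hCQ : closure (setA m g xbar d) = setB m g xbar d gdd) :
    ¬ ∃ z : Fin s → ℝ,
      (∀ j, fderiv ℝ (f j) xbar d = 0 → fderiv ℝ (f j) xbar z + fdd j < 0) ∧
      (∀ i, g i xbar = 0 → fderiv ℝ (g i) xbar d = 0 →
        fderiv ℝ (g i) xbar z + gdd i ≤ 0) :=
  statement5_general X hX f g xbar d hxX hfeas hmin hcritf hcritg hCont hfC1 hgC1 fdd gdd hfdd hCQ
end
end

section
/- Let X ⊆ ℝ^s be open, f : X → ℝ continuously differentiable, x̄ ∈ X, and d, z ∈ ℝ^s. Suppose ∇f(x̄)d = 0, the second-order directional derivative f''(x̄,d) exists, and ∇f(x̄)z + f''(x̄,d) < 0. Then there exists ε > 0 such that f(x̄ + td + 0.5t²z) < f(x̄) for all t ∈ (0,ε). -/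
open Set Filter Topology

noncomputable section

/-!
Strict differentiability of the `C¹` function `f` at `x̄` gives
`f(x̄ + td + ½t²z) - f(x̄ + td) = ½t² ∇f(x̄)z + o(t²)`, since both points tend to `x̄`, while
`∇f(x̄)d = 0` turns the definition of `f''(x̄,d)` into `f(x̄ + td) - f(x̄) = ½t² f''(x̄,d) + o(t²)`.
Adding, `2t⁻²(f(x̄ + td + ½t²z) - f(x̄)) → ∇f(x̄)z + f''(x̄,d) < 0`.
-/

section

variable {E F : Type*} [NormedAddCommGroup E] [NormedSpace ℝ E]
  [NormedAddCommGroup F] [NormedSpace ℝ F]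

theorem HasStrictFDerivAt.isLittleO_sub_of_tendsto {f : E → F} {L : E →L[ℝ] F} {x : E}
    {α : Type*} {l : Filter α} {a b : α → E} (hf : HasStrictFDerivAt f L x)
    (ha : Tendsto a l (𝓝 x)) (hb : Tendsto b l (𝓝 x)) :
    (fun t => f (b t) - f (a t) - L (b t - a t)) =o[l] fun t => b t - a t :=
  hf.isLittleO.comp_tendsto (hb.prodMk_nhds ha)

theorem HasStrictFDerivAt.tendsto_two_div_sq_mul_sub_add_sq_smul {f : E → ℝ} {L : E →L[ℝ] ℝ}
    {x : E} (hf : HasStrictFDerivAt f L x) (d z : E) :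
    Tendsto (fun t : ℝ => 2 / t ^ 2 * (f (x + t • d + (t ^ 2 / 2) • z) - f (x + t • d)))
      (𝓝[≠] 0) (𝓝 (L z)) := by
  have hcurve : ∀ w : E, Tendsto (fun t : ℝ => x + t • d + (t ^ 2 / 2) • w) (𝓝[≠] 0) (𝓝 x) :=
    fun w => tendsto_nhdsWithin_of_tendsto_nhds <| by
      simpa using ((by fun_prop : Continuous fun t : ℝ => x + t • d + (t ^ 2 / 2) • w).tendsto 0)
  have hstep : (fun t : ℝ => (t ^ 2 / 2) • z) =O[𝓝[≠] 0] fun t => t ^ 2 / 2 :=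
    .of_bound ‖z‖ <| .of_forall fun t => by rw [norm_smul, mul_comm]
  have hrem : (fun t : ℝ => f (x + t • d + (t ^ 2 / 2) • z) - f (x + t • d) - (t ^ 2 / 2) * L z)
      =o[𝓝[≠] 0] fun t => t ^ 2 / 2 := by
    have hline : Tendsto (fun t : ℝ => x + t • d) (𝓝[≠] 0) (𝓝 x) := by simpa using hcurve 0
    have := (hf.isLittleO_sub_of_tendsto hline (hcurve z)).trans_isBigO
      (by simpa only [add_sub_cancel_left] using hstep)
    simpa only [add_sub_cancel_left, map_smul, smul_eq_mul] using this
  rw [← zero_add (L z)]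
  refine (hrem.tendsto_div_nhds_zero.add_const (L z)).congr' ?_
  filter_upwards [self_mem_nhdsWithin] with t (ht : t ≠ 0)
  field_simp
  ring

end

/-- if `f` is continuously differentiable on the open set `X`, `x̄ ∈ X`,
`∇f(x̄)d = 0`, `f''(x̄,d)` exists, and `∇f(x̄)z + f''(x̄,d) < 0`, then there is `ε > 0` with
`f(x̄ + td + 0.5 t² z) < f(x̄)` for all `t ∈ (0,ε)`. -/
theorem statement7 {s : ℕ} (X : Set (Fin s → ℝ)) (hX : IsOpen X)
    (f : (Fin s → ℝ) → ℝ) (hf : ContDiffOn ℝ 1 f X)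
    (xbar d z : Fin s → ℝ) (hxX : xbar ∈ X)
    (hgrad : fderiv ℝ f xbar d = 0)
    (D : ℝ) (hD : HasDirDeriv2 f xbar d D)
    (hneg : fderiv ℝ f xbar z + D < 0) :
    ∃ ε > 0, ∀ t ∈ Ioo (0 : ℝ) ε, f (xbar + t • d + (t ^ 2 / 2) • z) < f xbar := by
  have hstrict : HasStrictFDerivAt f (fderiv ℝ f xbar) xbar :=
    (hf.contDiffAt (hX.mem_nhds hxX)).hasStrictFDerivAt one_ne_zero
  have hline : Tendsto (fun t : ℝ => 2 / t ^ 2 * (f (xbar + t • d) - f xbar)) (𝓝[>] 0) (𝓝 D) := by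
    simpa only [HasDirDeriv2, hgrad, mul_zero, sub_zero] using hD
  have hquot : Tendsto (fun t : ℝ => 2 / t ^ 2 * (f (xbar + t • d + (t ^ 2 / 2) • z) - f xbar))
      (𝓝[>] 0) (𝓝 (fderiv ℝ f xbar z + D)) :=
    (((hstrict.tendsto_two_div_sq_mul_sub_add_sq_smul d z).mono_left (nhdsGT_le_nhdsNE 0)).add
      hline).congr fun t => by ring
  obtain ⟨ε, hε, hsub⟩ := mem_nhdsGT_iff_exists_Ioo_subset.1 (hquot.eventually_lt_const hneg)
  exact ⟨ε, hε, fun t ht => sub_neg.1 <| neg_of_mul_neg_right (hsub ht) (by positivity)⟩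
end
end

section
/- Let x̄ be a feasible point of problem (VP) and d a nonzero critical direction at x̄. Suppose f_j, j = 1,…,n, and g_i, i ∈ I(x̄), are Fréchet differentiable at x̄ and that all the second-order directional derivatives f_j''(x̄,d), j = 1,…,n, and g_i''(x̄,d), i ∈ I(x̄), exist. Then the following are equivalent: (a) there exist Lagrange multipliers λ ∈ ℝⁿ, μ ∈ ℝ^m with λ ≥ 0 componentwise and λ ≠ 0, μ ≥ 0 componentwise, such that μ_i g_i(x̄) = 0 for i = 1,…,m, Σ_{j=1}^n λ_j ∇f_j(x̄) + Σ_{i=1}^m μ_i ∇g_i(x̄) = 0, and Σ_{j=1}^n λ_j f_j''(x̄,d) + Σ_{i ∈ I(x̄)} μ_i g_i''(x̄,d) ≥ 0; (b) neither of the following two systems has a solution: System 1 (unknowns u ∈ ℝ^s, v ∈ ℝ): ∇f_j(x̄)u + v f_j''(x̄,d) < 0 for all j = 1,…,n, ∇g_i(x̄)u + v g_i''(x̄,d) ≤ 0 for all i ∈ I(x̄), v > 0; System 2 (unknown u ∈ ℝ^s): ∇f_j(x̄)u < 0 for all j = 1,…,n and ∇g_i(x̄)u ≤ 0 for all i ∈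 I(x̄). -/
/-!
Write `x = (u, v) ∈ ℝ^s × ℝ`. Systems (1) and (2) together say that the linear inequalities
`∇f_j(x̄) u + v f_j''(x̄, d) < 0`, `∇g_i(x̄) u + v g_i''(x̄, d) ≤ 0` for active `i`, and `-v ≤ 0`
have a common solution. By Motzkin's transposition theorem they have none iff some nontrivial
nonnegative combination of these functionals, with a nonzero weight on the strict ones, vanishes;
the weight of `-v ≤ 0` is exactly the slack in the second-order inequality of (a).
Motzkin's theorem follows from Farkas' lemma one dimension up, and Farkas' lemma from separating a
point from a finitely generated cone, which is closed by the conic Carathéodory theorem: such a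
cone is a finite union of images of orthants under injective linear maps.
-/

open Set Filter Topology
open scoped Classical

noncomputable section

section ConicHull

variable {ι E : Type*} [AddCommGroup E] [Module ℝ E]

def conicHull (w : ι → E) (S : Finset ι) : Set E :=
  {x | ∃ c : ι → ℝ, (∀ i ∈ S, 0 ≤ c i) ∧ ∑ i ∈ S, c i • w i = x}

variable {w : ι → E} {S T : Finset ι} {x : E}

lemma conicHull_mono (hTS : T ⊆ S) : conicHull w T ⊆ conicHull w S := by
  rintro _ ⟨c, hc, rfl⟩
  refine ⟨fun i => if i ∈ T then c i else 0, fun i _ => ?_, ?_⟩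
  · dsimp only
    split_ifs with hi
    exacts [hc i hi, le_rfl]
  · simp only [ite_smul, zero_smul, Finset.sum_ite_mem, Finset.inter_eq_right.mpr hTS]

lemma mem_conicHull {i : ι} (hi : i ∈ S) : w i ∈ conicHull w S := by
  refine ⟨Pi.single i 1, fun j _ => ?_, ?_⟩
  · by_cases h : j = i <;> simp [h]
  · simp [Pi.single_apply, ite_smul, hi]

lemma exists_mem_conicHull_erase_of_not_linearIndepOn (hS : ¬ LinearIndepOn ℝ w S)
    (hx : x ∈ conicHull w S) : ∃ i ∈ S, x ∈ conicHull w (S.erase i) := by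
  obtain ⟨c, hc, rfl⟩ := hx
  obtain ⟨r, hr, hpos⟩ : ∃ r : ι → ℝ, ∑ i ∈ S, r i • w i = 0 ∧ ∃ i ∈ S, 0 < r i := by
    obtain ⟨r, hr, i, hi, hri⟩ := not_linearIndepOn_finset_iff.mp hS
    rcases hri.lt_or_gt with hneg | hpos
    · exact ⟨-r, by simp [neg_smul, hr], i, hi, neg_pos.mpr hneg⟩
    · exact ⟨r, hr, i, hi, hpos⟩
  -- `t` is the largest step along `-r` that keeps the coefficients nonnegative
  obtain ⟨i₀, hi₀, hmin⟩ := (S.filter (0 < r ·)).exists_min_image (fun i => c i / r i)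
    (by simpa [Finset.filter_nonempty_iff] using hpos)
  rw [Finset.mem_filter] at hi₀
  set t := c i₀ / r i₀
  refine ⟨i₀, hi₀.1, c - t • r, fun i hi => ?_, ?_⟩
  · have ht : 0 ≤ t := div_nonneg (hc i₀ hi₀.1) hi₀.2.le
    have hi' := Finset.mem_of_mem_erase hi
    rcases lt_or_ge 0 (r i) with hri | hri
    · have := (le_div_iff₀ hri).mp (hmin i (Finset.mem_filter.mpr ⟨hi', hri⟩))
      simp only [Pi.sub_apply, Pi.smul_apply, smul_eq_mul]
      linarith
    · simp only [Pi.sub_apply, Pi.smul_apply, smul_eq_mul]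
      linarith [mul_nonpos_of_nonneg_of_nonpos ht hri, hc i hi']
  · rw [Finset.sum_erase _ (by simp [t, div_mul_cancel₀ _ hi₀.2.ne'])]
    simp only [Pi.sub_apply, Pi.smul_apply, smul_eq_mul, sub_smul, mul_smul,
      Finset.sum_sub_distrib, ← Finset.smul_sum, hr, smul_zero, sub_zero]

lemma exists_linearIndepOn_mem_conicHull (hx : x ∈ conicHull w S) :
    ∃ T ⊆ S, LinearIndepOn ℝ w T ∧ x ∈ conicHull w T := by
  induction S using Finset.strongInduction with
  | H S ih =>
    by_cases hS : LinearIndepOn ℝ w S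
    · exact ⟨S, subset_rfl, hS, hx⟩
    · obtain ⟨i, hi, hxi⟩ := exists_mem_conicHull_erase_of_not_linearIndepOn hS hx
      obtain ⟨T, hT, hTi, hxT⟩ := ih _ (Finset.erase_ssubset hi) hxi
      exact ⟨T, hT.trans (S.erase_subset i), hTi, hxT⟩

variable [TopologicalSpace E] [IsTopologicalAddGroup E] [ContinuousSMul ℝ E] [T2Space E]

lemma isClosed_conicHull_of_linearIndepOn (hS : LinearIndepOn ℝ w S) :
    IsClosed (conicHull w S) := by
  set L := Fintype.linearCombination ℝ (fun i : S => w i)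
  have hL : IsClosedEmbedding L := L.isClosedEmbedding_of_injective
    (LinearMap.ker_eq_bot.mpr hS.fintypeLinearCombination_injective)
  have himage : conicHull w S = L '' {c | 0 ≤ c} := by
    ext x
    constructor
    · rintro ⟨c, hc, rfl⟩
      refine ⟨fun i => c i, fun i => hc i i.2, ?_⟩
      simp [L, Fintype.linearCombination_apply, Finset.sum_attach S (fun i => c i • w i)]
    · rintro ⟨c, hc, rfl⟩
      refine ⟨fun i => if h : i ∈ S then c ⟨i, h⟩ else 0,
        fun i hi => by simpa [hi] using hc ⟨i, hi⟩, ?_⟩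
      simp [L, Fintype.linearCombination_apply, ← Finset.sum_coe_sort S]
  rw [himage]
  exact hL.isClosedMap _ (isClosed_le continuous_const continuous_id)

lemma isClosed_conicHull : IsClosed (conicHull w S) := by
  have : conicHull w S =
      ⋃ (T : Finset ι) (_ : T ∈ S.powerset.filter fun T : Finset ι => LinearIndepOn ℝ w T),
        conicHull w T := by
    refine subset_antisymm (fun x hx => ?_) (Set.iUnion₂_subset fun T hT => ?_)
    · obtain ⟨T, hTS, hT, hxT⟩ := exists_linearIndepOn_mem_conicHull hx
      exact Set.mem_biUnion (Finset.mem_filter.mpr ⟨Finset.mem_powerset.mpr hTS, hT⟩) hxT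
    · exact conicHull_mono (Finset.mem_powerset.mp (Finset.mem_filter.mp hT).1)
  rw [this]
  exact Set.Finite.isClosed_biUnion (Finset.finite_toSet _)
    fun T hT => isClosed_conicHull_of_linearIndepOn (Finset.mem_filter.mp hT).2

variable (w S) in
def conicHullCone : ProperCone ℝ E where
  carrier := conicHull w S
  add_mem' := by
    rintro _ _ ⟨c, hc, rfl⟩ ⟨d, hd, rfl⟩
    exact ⟨c + d, fun i hi => add_nonneg (hc i hi) (hd i hi), by
      simp only [Pi.add_apply, add_smul, Finset.sum_add_distrib]⟩
  zero_mem' := ⟨0, fun _ _ => le_rfl, by simp⟩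
  smul_mem' := by
    rintro t _ ⟨c, hc, rfl⟩
    exact ⟨(t : ℝ) • c, fun i hi => mul_nonneg t.2 (hc i hi), by
      simp only [Pi.smul_apply, smul_eq_mul, mul_smul, ← Finset.smul_sum]; rfl⟩
  isClosed' := isClosed_conicHull

end ConicHull

section Alternatives

variable {V : Type*} [NormedAddCommGroup V] [NormedSpace ℝ V] [FiniteDimensional ℝ V]

theorem mem_conicHull_or_exists_lt_zero {ι : Type*} (φ : ι → StrongDual ℝ V) (S : Finset ι)
    (ψ : StrongDual ℝ V) :
    ψ ∈ conicHull φ S ∨ ∃ x : V, (∀ i ∈ S, 0 ≤ φ i x) ∧ ψ x < 0 := by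
  refine or_iff_not_imp_left.mpr fun hψ => ?_
  obtain ⟨f, hf, hfψ⟩ := (conicHullCone φ S).hyperplane_separation_point hψ
  obtain ⟨x, rfl⟩ := (topDualPairing ℝ V).flip.toContPerfPair.surjective f
  exact ⟨x, fun i hi => hf _ (mem_conicHull hi), hfψ⟩

theorem motzkin_transposition {ι κ : Type*} [Fintype ι] [Fintype κ]
    (A : ι → StrongDual ℝ V) (B : κ → StrongDual ℝ V) :
    (∃ (lam : ι → ℝ) (mu : κ → ℝ), 0 ≤ lam ∧ lam ≠ 0 ∧ 0 ≤ mu ∧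
      ∑ i, lam i • A i + ∑ k, mu k • B k = 0) ↔
    ¬ ∃ x : V, (∀ i, A i x < 0) ∧ ∀ k, B k x ≤ 0 := by
  constructor
  · rintro ⟨lam, mu, hlam, hlam0, hmu, hsum⟩ ⟨x, hA, hB⟩
    obtain ⟨i₀, hi₀⟩ := Function.ne_iff.mp hlam0
    have hAx : ∑ i, lam i * A i x < 0 := by
      refine Finset.sum_neg' (fun i _ => mul_nonpos_of_nonneg_of_nonpos (hlam i) (hA i).le)
        ⟨i₀, Finset.mem_univ _, mul_neg_of_pos_of_neg ((hlam i₀).lt_of_ne' hi₀) (hA i₀)⟩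
    have hBx : ∑ k, mu k * B k x ≤ 0 :=
      Finset.sum_nonpos fun k _ => mul_nonpos_of_nonneg_of_nonpos (hmu k) (hB k)
    have hx := congr($hsum x)
    simp only [add_apply, sum_apply, smul_apply, smul_eq_mul, zero_apply] at hx
    linarith
  · intro hsys
    let fst := ContinuousLinearMap.fst ℝ V ℝ
    let snd := ContinuousLinearMap.snd ℝ V ℝ
    rcases mem_conicHull_or_exists_lt_zero
      (Sum.elim (fun i => (A i).comp fst + snd) (fun k => (B k).comp fst)) Finset.univ snd with
      ⟨c, hc, hsum⟩ | ⟨⟨x, t⟩, hx, ht⟩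
    · have hc' : ∀ x t, ∑ i, (c (.inl i) * A i x + c (.inl i) * t) + ∑ k, c (.inr k) * B k x = t :=
        fun x t => by simpa [Fintype.sum_sum_type, fst, snd] using congr($hsum (x, t))
      refine ⟨fun i => c (.inl i), fun k => c (.inr k), fun i => hc _ (Finset.mem_univ _),
        fun h0 => ?_, fun k => hc _ (Finset.mem_univ _), ContinuousLinearMap.ext fun x => ?_⟩
      · simpa [funext_iff.mp h0] using hc' 0 1
      · simpa using hc' x 0
    · have hx' : ∀ i, 0 ≤ A i x + t := fun i => by simpa [fst, snd] using hx (.inl i) (by simp)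
      refine (hsys ⟨-x, fun i => ?_, fun k => by simpa [fst] using hx (.inr k) (by simp)⟩).elim
      linarith [map_neg (A i) x, hx' i, show t < 0 by simpa [snd] using ht]

end Alternatives

section SecondOrder

variable {V ι κ : Type*} [NormedAddCommGroup V] [NormedSpace ℝ V]
  (a : ι → StrongDual ℝ V) (b : κ → StrongDual ℝ V) (fdd : ι → ℝ) (gdd : κ → ℝ) (act : κ → Prop)

def secondOrderStrict (j : ι) : StrongDual ℝ (V × ℝ) :=
  (a j).comp (.fst ℝ V ℝ) + fdd j • .snd ℝ V ℝ

/-- The extra index `none` carries the sign constraint `v ≥ 0`. -/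
def secondOrderWeak : Option κ → StrongDual ℝ (V × ℝ)
  | none => -.snd ℝ V ℝ
  | some i => if act i then (b i).comp (.fst ℝ V ℝ) + gdd i • .snd ℝ V ℝ else 0

variable [Fintype ι] [Fintype κ] in
def SecondOrderKKT (lam : ι → ℝ) (mu : κ → ℝ) : Prop :=
  (∀ j, 0 ≤ lam j) ∧ lam ≠ 0 ∧ (∀ i, 0 ≤ mu i) ∧ (∀ i, ¬ act i → mu i = 0) ∧
    ((∑ j, lam j • a j) + ∑ i, mu i • b i = 0) ∧
    0 ≤ (∑ j, lam j * fdd j) + ∑ i, (if act i then mu i * gdd i else 0)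

variable {a b fdd gdd act}

@[simp]
lemma secondOrderStrict_apply (j : ι) (u : V) (v : ℝ) :
    secondOrderStrict a fdd j (u, v) = a j u + v * fdd j := by
  simp [secondOrderStrict, mul_comm]

@[simp]
lemma secondOrderWeak_none (u : V) (v : ℝ) : secondOrderWeak b gdd act none (u, v) = -v := by
  simp [secondOrderWeak]

@[simp]
lemma secondOrderWeak_some (i : κ) (u : V) (v : ℝ) :
    secondOrderWeak b gdd act (some i) (u, v) = if act i then b i u + v * gdd i else 0 := by
  by_cases hi : act i <;> simp [secondOrderWeak, hi, mul_comm]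

lemma exists_secondOrder_solution_iff :
    ((∃ (u : V) (v : ℝ), 0 < v ∧
        (∀ j, a j u + v * fdd j < 0) ∧ (∀ i, act i → b i u + v * gdd i ≤ 0)) ∨
      (∃ u : V, (∀ j, a j u < 0) ∧ (∀ i, act i → b i u ≤ 0))) ↔
      ∃ x : V × ℝ, (∀ j, secondOrderStrict a fdd j x < 0) ∧
        ∀ k, secondOrderWeak b gdd act k x ≤ 0 := by
  constructor
  · rintro (⟨u, v, hv, hf, hg⟩ | ⟨u, hf, hg⟩)
    · refine ⟨(u, v), fun j => by simpa using hf j, fun k => ?_⟩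
      rcases k with _ | i
      · simpa using hv.le
      · by_cases hi : act i <;> simp [hi, hg]
    · refine ⟨(u, 0), fun j => by simpa using hf j, fun k => ?_⟩
      rcases k with _ | i
      · simp
      · by_cases hi : act i <;> simp [hi, hg]
  · rintro ⟨⟨u, v⟩, hf, hg⟩
    have hv : 0 ≤ v := by simpa using hg none
    have hg' : ∀ i, act i → b i u + v * gdd i ≤ 0 := fun i hi => by
      simpa [hi] using hg (some i)
    simp only [secondOrderStrict_apply] at hf
    rcases hv.eq_or_lt with rfl | hv
    · exact .inr ⟨u, fun j => by simpa using hf j, fun i hi => by simpa using hg' i hi⟩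
    · exact .inl ⟨u, v, hv, hf, hg'⟩

variable [Fintype ι] [Fintype κ]

lemma SecondOrderKKT.exists_weak_multipliers {lam : ι → ℝ} {mu : κ → ℝ}
    (h : SecondOrderKKT a b fdd gdd act lam mu) :
    ∃ mu' : Option κ → ℝ, 0 ≤ mu' ∧
      ∑ j, lam j • secondOrderStrict a fdd j + ∑ k, mu' k • secondOrderWeak b gdd act k = 0 := by
  obtain ⟨-, -, hmu, hslack, hsum, hsecond⟩ := h
  refine ⟨fun o => o.elim (∑ j, lam j * fdd j + ∑ i, if act i then mu i * gdd i else 0) mu,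
    fun o => ?_, ContinuousLinearMap.ext fun ⟨u, v⟩ => ?_⟩
  · cases o
    exacts [hsecond, hmu _]
  have h1 := congr($hsum u)
  have hterm : ∀ i, mu i * (if act i then b i u + v * gdd i else 0) =
      mu i * b i u + v * (if act i then mu i * gdd i else 0) := fun i => by
    by_cases hi : act i <;> simp [hi, hslack]
    ring
  have hlam : ∑ j, lam j * (v * fdd j) = v * ∑ j, lam j * fdd j := by
    rw [Finset.mul_sum]
    exact Finset.sum_congr rfl fun j _ => by ring
  simp only [sum_apply, add_apply, smul_apply, smul_eq_mul, zero_apply, Fintype.sum_option,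
    secondOrderStrict_apply, secondOrderWeak_none, secondOrderWeak_some, Option.elim, hterm,
    mul_add, Finset.sum_add_distrib] at h1 ⊢
  rw [hlam, ← Finset.mul_sum]
  linear_combination h1

lemma secondOrderKKT_of_weak_multipliers {lam : ι → ℝ} {mu : Option κ → ℝ} (hlam : 0 ≤ lam)
    (hlam0 : lam ≠ 0) (hmu : 0 ≤ mu)
    (hsum : ∑ j, lam j • secondOrderStrict a fdd j + ∑ k, mu k • secondOrderWeak b gdd act k = 0) :
    SecondOrderKKT a b fdd gdd act lam fun i => if act i then mu (some i) else 0 := by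
  have h1 := fun u => congr($hsum (u, 0))
  have h2 := congr($hsum (0, 1))
  simp only [sum_apply, add_apply, smul_apply, smul_eq_mul, zero_apply, Fintype.sum_option,
    secondOrderStrict_apply, secondOrderWeak_none, secondOrderWeak_some, map_zero, zero_mul,
    add_zero, one_mul, zero_add, mul_zero, neg_zero] at h1 h2
  refine ⟨hlam, hlam0, fun i => ?_, fun i hi => if_neg hi, ContinuousLinearMap.ext fun u => ?_, ?_⟩
  · dsimp only
    split_ifs
    exacts [hmu _, le_rfl]
  · have hterm : ∀ i, ((if act i then mu (some i) else 0) • b i) u =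
        mu (some i) * (if act i then b i u else 0) := fun i => by
      by_cases hi : act i <;> simp [hi]
    simp only [add_apply, sum_apply, smul_apply, smul_eq_mul, zero_apply, hterm]
    exact h1 u
  · have hterm : ∀ i, (if act i then (if act i then mu (some i) else 0) * gdd i else 0) =
        mu (some i) * (if act i then gdd i else 0) := fun i => by
      by_cases hi : act i <;> simp [hi]
    have h0 : (0 : ℝ) ≤ mu none := hmu none
    simp only [hterm]
    linarith

lemma exists_secondOrderKKT_iff :
    (∃ lam mu, SecondOrderKKT a b fdd gdd act lam mu) ↔
      ∃ (lam : ι → ℝ) (mu : Option κ → ℝ), 0 ≤ lam ∧ lam ≠ 0 ∧ 0 ≤ mu ∧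
        ∑ j, lam j • secondOrderStrict a fdd j + ∑ k, mu k • secondOrderWeak b gdd act k = 0 := by
  constructor
  · rintro ⟨lam, mu, h⟩
    obtain ⟨mu', hmu', hsum⟩ := h.exists_weak_multipliers
    exact ⟨lam, mu', h.1, h.2.1, hmu', hsum⟩
  · rintro ⟨lam, mu, hlam, hlam0, hmu, hsum⟩
    exact ⟨lam, _, secondOrderKKT_of_weak_multipliers hlam hlam0 hmu hsum⟩

theorem exists_secondOrderKKT_iff_not_exists [FiniteDimensional ℝ V] :
    (∃ lam mu, SecondOrderKKT a b fdd gdd act lam mu) ↔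
    ((¬ ∃ (u : V) (v : ℝ), 0 < v ∧
        (∀ j, a j u + v * fdd j < 0) ∧ (∀ i, act i → b i u + v * gdd i ≤ 0)) ∧
     (¬ ∃ u : V, (∀ j, a j u < 0) ∧ (∀ i, act i → b i u ≤ 0))) := by
  rw [exists_secondOrderKKT_iff, motzkin_transposition, ← exists_secondOrder_solution_iff, not_or]

end SecondOrder

theorem statement8_general {s n m : ℕ}
    (f : Fin n → (Fin s → ℝ) → ℝ) (g : Fin m → (Fin s → ℝ) → ℝ)
    (xbar : Fin s → ℝ)
    -- second-order directional derivatives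
    (fdd : Fin n → ℝ) (gdd : Fin m → ℝ) :
    (∃ (lam : Fin n → ℝ) (mu : Fin m → ℝ),
        (∀ j, 0 ≤ lam j) ∧ lam ≠ 0 ∧ (∀ i, 0 ≤ mu i) ∧
        (∀ i, mu i * g i xbar = 0) ∧
        ((∑ j, lam j • fderiv ℝ (f j) xbar) + ∑ i, mu i • fderiv ℝ (g i) xbar = 0) ∧
        0 ≤ (∑ j, lam j * fdd j) + ∑ i, (if g i xbar = 0 then mu i * gdd i else 0))
    ↔
    ((¬ ∃ (u : Fin s → ℝ) (v : ℝ), 0 < v ∧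
        (∀ j, fderiv ℝ (f j) xbar u + v * fdd j < 0) ∧
        (∀ i, g i xbar = 0 → fderiv ℝ (g i) xbar u + v * gdd i ≤ 0)) ∧
     (¬ ∃ u : Fin s → ℝ,
        (∀ j, fderiv ℝ (f j) xbar u < 0) ∧
        (∀ i, g i xbar = 0 → fderiv ℝ (g i) xbar u ≤ 0))) := by
  simp only [mul_eq_zero, or_iff_not_imp_right]
  exact exists_secondOrderKKT_iff_not_exists

/-- for a feasible `x̄` and a nonzero critical direction `d`, with the stated
differentiability assumptions, the existence of Lagrange multipliers `λ ≥ 0`, `λ ≠ 0`, `μ ≥ 0`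
satisfying the second-order KKT conditions is equivalent to the inconsistency of both
systems (1) and (2). -/
theorem statement8 {s n m : ℕ} (X : Set (Fin s → ℝ)) (hX : IsOpen X)
    (f : Fin n → (Fin s → ℝ) → ℝ) (g : Fin m → (Fin s → ℝ) → ℝ)
    (xbar d : Fin s → ℝ) (hxX : xbar ∈ X) (hfeas : ∀ i, g i xbar ≤ 0)
    (hd : d ≠ 0)
    -- d is a critical direction
    (hcritf : ∀ j, fderiv ℝ (f j) xbar d ≤ 0)
    (hcritg : ∀ i, g i xbar = 0 → fderiv ℝ (g i) xbar d ≤ 0)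
    -- differentiability assumptions
    (hdifff : ∀ j, DifferentiableAt ℝ (f j) xbar)
    (hdiffg : ∀ i, g i xbar = 0 → DifferentiableAt ℝ (g i) xbar)
    -- second-order directional derivatives
    (fdd : Fin n → ℝ) (gdd : Fin m → ℝ)
    (hfdd : ∀ j, HasDirDeriv2 (f j) xbar d (fdd j))
    (hgdd : ∀ i, g i xbar = 0 → HasDirDeriv2 (g i) xbar d (gdd i)) :
    (∃ (lam : Fin n → ℝ) (mu : Fin m → ℝ),
        (∀ j, 0 ≤ lam j) ∧ lam ≠ 0 ∧ (∀ i, 0 ≤ mu i) ∧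
        (∀ i, mu i * g i xbar = 0) ∧
        ((∑ j, lam j • fderiv ℝ (f j) xbar) + ∑ i, mu i • fderiv ℝ (g i) xbar = 0) ∧
        0 ≤ (∑ j, lam j * fdd j) + ∑ i, (if g i xbar = 0 then mu i * gdd i else 0))
    ↔
    ((¬ ∃ (u : Fin s → ℝ) (v : ℝ), 0 < v ∧
        (∀ j, fderiv ℝ (f j) xbar u + v * fdd j < 0) ∧
        (∀ i, g i xbar = 0 → fderiv ℝ (g i) xbar u + v * gdd i ≤ 0)) ∧
     (¬ ∃ u : Fin s → ℝ,
        (∀ j, fderiv ℝ (f j) xbar u < 0) ∧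
        (∀ i, g i xbar = 0 → fderiv ℝ (g i) xbar u ≤ 0))) :=
  statement8_general f g xbar fdd gdd
end
end

section
/- Let x̄ be a weak local Pareto minimizer of problem (VP) and let d be a nonzero critical direction at x̄. Suppose Conditions (C) are satisfied and the second-order Zangwill constraint qualification cl(A(x̄,d)) = B(x̄,d) holds (and that f_j''(x̄,d), j = 1,…,n, and g_i''(x̄,d), i ∈ I(x̄), exist). Then the system with unknowns u ∈ ℝ^s and v ∈ ℝ: ∇f_j(x̄)u + v f_j''(x̄,d) < 0 for all j = 1,…,n, ∇g_i(x̄)u + v g_i''(x̄,d) ≤ 0 for all i ∈ I(x̄), v > 0, has no solution. -/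
/-!
Suppose `(u, v)` solved the system and put `z := v⁻¹ • u`. Then `z ∈ B(x̄,d) = cl A(x̄,d)`, and
since the strict inequalities `∇f_j(x̄)z + f_j''(x̄,d) < 0` define an open set, some `z' ∈ A(x̄,d)`
satisfies them too. Along the parabola `t ↦ x̄ + t d + (t²/2) z'` every `f_j` has second-order
quotient tending to `f_j''(x̄,d) + ∇f_j(x̄)z' < 0`, so `f_j` drops strictly below `f_j(x̄)` for
small `t > 0`, while the parabola stays feasible: inactive constraints by continuity, active
ones with `∇g_i(x̄)d < 0` by first-order decrease, and the remaining ones because `z' ∈ A(x̄,d)`.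
This contradicts weak local Pareto minimality.
-/

open Set Filter Topology

noncomputable section

open Asymptotics

section Curve

variable {E : Type*} [NormedAddCommGroup E] [NormedSpace ℝ E]

def parabola (x d z : E) (t : ℝ) : E := x + t • d + (t ^ 2 / 2) • z

lemma hasDerivAt_parabola_zero (x d z : E) : HasDerivAt (parabola x d z) d 0 := by
  have hlin : HasDerivAt (fun t : ℝ => t • d) ((1 : ℝ) • d) 0 := (hasDerivAt_id 0).smul_const d
  have hquad : HasDerivAt (fun t : ℝ => t ^ 2 / 2) ((2 * 0 ^ 1) / 2) 0 :=
    (hasDerivAt_pow 2 0).div_const 2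
  have := (hlin.const_add x).add (hquad.smul_const z)
  simp only [one_smul, pow_one, mul_zero, zero_div, zero_smul, add_zero] at this
  exact this

lemma parabola_zero (x d z : E) : parabola x d z 0 = x := by simp [parabola]

lemma tendsto_parabola (x d z : E) : Tendsto (parabola x d z) (𝓝[>] 0) (𝓝 x) := by
  have h := (hasDerivAt_parabola_zero x d z).continuousAt.tendsto
  rw [parabola_zero] at h
  exact h.mono_left nhdsWithin_le_nhds

lemma tendsto_slope_comp_parabola {h : E → ℝ} {x : E} (d z : E) (hh : DifferentiableAt ℝ h x) :
    Tendsto (fun t => (h (parabola x d z t) - h x) / t) (𝓝[>] 0) (𝓝 (fderiv ℝ h x d)) := by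
  have hh' : HasFDerivAt h (fderiv ℝ h x) (parabola x d z 0) := by
    simpa [parabola_zero] using hh.hasFDerivAt
  have hslope := hasDerivAt_iff_tendsto_slope.mp
    (hh'.comp_hasDerivAt 0 (hasDerivAt_parabola_zero x d z))
  refine (hslope.mono_left (nhdsWithin_mono 0 fun t ht => ne_of_gt ht)).congr fun t => ?_
  simp [slope_def_field, parabola_zero]

/-- The base point `x + t • d` moves with `t`, so mere differentiability at `x` would not do:
strict differentiability (from `C¹`) is what controls the increment `(t²/2) • z` there. -/
lemma isLittleO_sub_comp_parabola {h : E → ℝ} {x : E} (d z : E) (hh : ContDiffAt ℝ 1 h x) :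
    (fun t => h (parabola x d z t) - h (x + t • d) - (t ^ 2 / 2) * fderiv ℝ h x z)
      =o[𝓝[>] 0] fun t => t ^ 2 := by
  have hstrict := (hh.hasStrictFDerivAt one_ne_zero).isLittleO
  have hpair : Tendsto (fun t => (parabola x d z t, parabola x d 0 t)) (𝓝[>] 0) (𝓝 (x, x)) := by
    rw [nhds_prod_eq]
    exact (tendsto_parabola x d z).prodMk (tendsto_parabola x d 0)
  have hstep : ∀ t : ℝ, parabola x d z t - parabola x d 0 t = (t ^ 2 / 2) • z := fun t => by
    simp [parabola]
  have hcomp := hstrict.comp_tendsto hpair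
  simp only [Function.comp_def, hstep, map_smul, smul_eq_mul] at hcomp
  simp only [parabola, smul_zero, add_zero] at hcomp
  refine hcomp.trans_isBigO (IsBigO.of_bound (‖z‖ / 2) (Eventually.of_forall fun t => ?_))
  rw [norm_smul, Real.norm_eq_abs, Real.norm_eq_abs, abs_div, abs_two, abs_of_nonneg (sq_nonneg t)]
  exact le_of_eq (by ring)

lemma tendsto_secondOrderQuotient_comp_parabola {h : E → ℝ} {x d : E} {D : ℝ} (z : E)
    (hh : ContDiffAt ℝ 1 h x)
    (hD : Tendsto (fun t : ℝ => 2 / t ^ 2 * (h (x + t • d) - h x - t * fderiv ℝ h x d))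
      (𝓝[>] 0) (𝓝 D)) :
    Tendsto (fun t : ℝ => 2 / t ^ 2 * (h (parabola x d z t) - h x - t * fderiv ℝ h x d))
      (𝓝[>] 0) (𝓝 (D + fderiv ℝ h x z)) := by
  have hrem := ((isLittleO_sub_comp_parabola d z hh).tendsto_div_nhds_zero).const_mul 2
  rw [mul_zero] at hrem
  have hsum := (hrem.add hD).add (tendsto_const_nhds (x := fderiv ℝ h x z))
  rw [zero_add] at hsum
  refine hsum.congr' ?_
  filter_upwards [self_mem_nhdsWithin] with t (ht : (0 : ℝ) < t)
  field_simp
  ring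

lemma eventually_lt_comp_parabola_of_fderiv_neg {h : E → ℝ} {x : E} {d : E} (z : E)
    (hh : DifferentiableAt ℝ h x) (hd : fderiv ℝ h x d < 0) :
    ∀ᶠ t in 𝓝[>] 0, h (parabola x d z t) < h x := by
  filter_upwards [(tendsto_slope_comp_parabola d z hh).eventually_lt_const hd,
    self_mem_nhdsWithin] with t hslope (ht : 0 < t)
  have := mul_neg_of_neg_of_pos hslope ht
  rw [div_mul_cancel₀ _ ht.ne'] at this
  linarith

lemma eventually_lt_comp_parabola_of_secondOrder_neg {h : E → ℝ} {x d : E} {D : ℝ} {z : E}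
    (hh : ContDiffAt ℝ 1 h x) (hd : fderiv ℝ h x d ≤ 0)
    (hD : Tendsto (fun t : ℝ => 2 / t ^ 2 * (h (x + t • d) - h x - t * fderiv ℝ h x d))
      (𝓝[>] 0) (𝓝 D))
    (hz : fderiv ℝ h x z + D < 0) :
    ∀ᶠ t in 𝓝[>] 0, h (parabola x d z t) < h x := by
  have hlim := tendsto_secondOrderQuotient_comp_parabola z hh hD
  have hneg : D + fderiv ℝ h x z < 0 := by linarith
  filter_upwards [hlim.eventually_lt_const hneg, self_mem_nhdsWithin]
    with t hquot (ht : 0 < t)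
  have hrem : h (parabola x d z t) - h x - t * fderiv ℝ h x d < 0 := by
    have := mul_neg_of_pos_of_neg (by positivity : (0 : ℝ) < t ^ 2 / 2) hquot
    rwa [← mul_assoc, show t ^ 2 / 2 * (2 / t ^ 2) = 1 by field_simp, one_mul] at this
  nlinarith

end Curve

lemma isOpen_setOf_forall_add_lt {ι E : Type*} [Finite ι] [TopologicalSpace E]
    {φ : ι → E → ℝ} (hφ : ∀ j, Continuous (φ j)) (c : ι → ℝ) :
    IsOpen {z | ∀ j, φ j z + c j < 0} := by
  simp only [ofPred_forall]
  exact isOpen_iInter_of_finite fun j => isOpen_lt ((hφ j).add continuous_const) continuous_const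

section Feasibility

variable {s m : ℕ} {g : Fin m → (Fin s → ℝ) → ℝ} {x d z : Fin s → ℝ}

lemma exists_mem_setA_forall_fderiv_add_lt {n : ℕ} {f : Fin n → (Fin s → ℝ) → ℝ}
    {fdd : Fin n → ℝ} {gdd : Fin m → ℝ} (hCQ : closure (setA m g x d) = setB m g x d gdd)
    {u : Fin s → ℝ} {v : ℝ} (hv : 0 < v) (hfu : ∀ j, fderiv ℝ (f j) x u + v * fdd j < 0)
    (hgu : ∀ i, g i x = 0 → fderiv ℝ (g i) x u + v * gdd i ≤ 0) :
    ∃ z ∈ setA m g x d, ∀ j, fderiv ℝ (f j) x z + fdd j < 0 := by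
  have hscale : ∀ (φ : (Fin s → ℝ) →L[ℝ] ℝ) (c : ℝ),
      φ (v⁻¹ • u) + c = v⁻¹ * (φ u + v * c) := fun φ c => by
    rw [map_smul, smul_eq_mul]
    field_simp
  have hzB : v⁻¹ • u ∈ setB m g x d gdd := fun i hi _ => by
    rw [hscale]
    exact mul_nonpos_of_nonneg_of_nonpos (inv_nonneg.mpr hv.le) (hgu i hi)
  have hzf : ∀ j, fderiv ℝ (f j) x (v⁻¹ • u) + fdd j < 0 := fun j => by
    rw [hscale]
    exact mul_neg_of_pos_of_neg (inv_pos.mpr hv) (hfu j)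
  rw [← hCQ] at hzB
  obtain ⟨z, hzf', hzA⟩ := mem_closure_iff.mp hzB _
    (isOpen_setOf_forall_add_lt (fun j => (fderiv ℝ (f j) x).continuous) fdd) hzf
  exact ⟨z, hzA, hzf'⟩

lemma eventually_forall_comp_parabola_nonpos (hz : z ∈ setA m g x d)
    (hfeas : ∀ i, g i x ≤ 0)
    (hcont : ∀ i, g i x ≠ 0 → ContinuousAt (g i) x)
    (hdiff : ∀ i, g i x = 0 → DifferentiableAt ℝ (g i) x)
    (hcrit : ∀ i, g i x = 0 → fderiv ℝ (g i) x d ≤ 0) :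
    ∀ᶠ t in 𝓝[>] 0, ∀ i, g i (parabola x d z t) ≤ 0 := by
  refine eventually_all.mpr fun i => ?_
  by_cases hact : g i x = 0
  · rcases (hcrit i hact).lt_or_eq with hneg | hzero
    · filter_upwards [eventually_lt_comp_parabola_of_fderiv_neg z (hdiff i hact) hneg]
        with t ht
      exact (ht.trans_eq hact).le
    · obtain ⟨δ, hδ, hgδ⟩ := hz i hact hzero
      filter_upwards [Ioo_mem_nhdsGT hδ] with t ht
      exact hgδ t ht
  · have hlim := (hcont i hact).tendsto.comp (tendsto_parabola x d z)
    filter_upwards [hlim.eventually_lt_const ((hfeas i).lt_of_ne hact)] with t ht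
    exact ht.le

end Feasibility

theorem statement13_general {s n m : ℕ} (X : Set (Fin s → ℝ)) (hX : IsOpen X)
    (f : Fin n → (Fin s → ℝ) → ℝ) (g : Fin m → (Fin s → ℝ) → ℝ)
    (xbar d : Fin s → ℝ) (hxX : xbar ∈ X) (hfeas : ∀ i, g i xbar ≤ 0)
    -- weak local Pareto minimizer
    (hmin : ∃ U ∈ 𝓝 xbar, ∀ y ∈ U, y ∈ X → (∀ i, g i y ≤ 0) → ¬ ∀ j, f j y < f j xbar)
    (hcritf : ∀ j, fderiv ℝ (f j) xbar d ≤ 0)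
    (hcritg : ∀ i, g i xbar = 0 → fderiv ℝ (g i) xbar d ≤ 0)
    -- Conditions (C)
    (hCont : ∀ i, g i xbar ≠ 0 → ContinuousAt (g i) xbar)
    (hfC1 : ∀ j, ContDiffOn ℝ 1 (f j) X)
    (hgC1 : ∀ i, g i xbar = 0 → ContDiffOn ℝ 1 (g i) X)
    -- existence of the second-order directional derivatives
    (fdd : Fin n → ℝ) (gdd : Fin m → ℝ)
    (hfdd : ∀ j, HasDirDeriv2 (f j) xbar d (fdd j))
    -- second-order Zangwill constraint qualification
    (hCQ : closure (setA m g xbar d) = setB m g xbar d gdd) :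
    ¬ ∃ (u : Fin s → ℝ) (v : ℝ), 0 < v ∧
        (∀ j, fderiv ℝ (f j) xbar u + v * fdd j < 0) ∧
        (∀ i, g i xbar = 0 → fderiv ℝ (g i) xbar u + v * gdd i ≤ 0) := by
  rintro ⟨u, v, hv, hfu, hgu⟩
  obtain ⟨z, hzA, hzf⟩ := exists_mem_setA_forall_fderiv_add_lt hCQ hv hfu hgu
  obtain ⟨U, hU, hUmin⟩ := hmin
  have hXnhds := hX.mem_nhds hxX
  have hmemU := (tendsto_parabola xbar d z).eventually_mem hU
  have hmemX := (tendsto_parabola xbar d z).eventually_mem hXnhds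
  have hdecr : ∀ᶠ t in 𝓝[>] 0, ∀ j, f j (parabola xbar d z t) < f j xbar :=
    eventually_all.mpr fun j => eventually_lt_comp_parabola_of_secondOrder_neg
      ((hfC1 j).contDiffAt hXnhds) (hcritf j) (hfdd j) (hzf j)
  have hfeas' := eventually_forall_comp_parabola_nonpos hzA hfeas hCont
    (fun i hi => ((hgC1 i hi).contDiffAt hXnhds).differentiableAt one_ne_zero) hcritg
  obtain ⟨t, htU, htX, htf, htg⟩ := (hmemU.and (hmemX.and (hdecr.and hfeas'))).exists
  exact hUmin _ htU htX htg htf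

/-- if `x̄` is a weak local Pareto minimizer of (VP), `d` a nonzero critical
direction, Conditions (C) hold, the second-order Zangwill CQ `cl(A(x̄,d)) = B(x̄,d)` holds, and
the second-order directional derivatives `f_j''(x̄,d)`, `g_i''(x̄,d)` (`i ∈ I(x̄)`) exist, then
the system `∇f_j(x̄)u + v f_j''(x̄,d) < 0` for all `j`, `∇g_i(x̄)u + v g_i''(x̄,d) ≤ 0` for all
`i ∈ I(x̄)`, `v > 0`, has no solution. -/
theorem statement13 {s n m : ℕ} (X : Set (Fin s → ℝ)) (hX : IsOpen X)
    (f : Fin n → (Fin s → ℝ) → ℝ) (g : Fin m → (Fin s → ℝ) → ℝ)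
    (xbar d : Fin s → ℝ) (hxX : xbar ∈ X) (hfeas : ∀ i, g i xbar ≤ 0)
    -- weak local Pareto minimizer
    (hmin : ∃ U ∈ 𝓝 xbar, ∀ y ∈ U, y ∈ X → (∀ i, g i y ≤ 0) → ¬ ∀ j, f j y < f j xbar)
    -- d is a nonzero critical direction
    (hd : d ≠ 0)
    (hcritf : ∀ j, fderiv ℝ (f j) xbar d ≤ 0)
    (hcritg : ∀ i, g i xbar = 0 → fderiv ℝ (g i) xbar d ≤ 0)
    -- Conditions (C)
    (hCont : ∀ i, g i xbar ≠ 0 → ContinuousAt (g i) xbar)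
    (hfC1 : ∀ j, ContDiffOn ℝ 1 (f j) X)
    (hgC1 : ∀ i, g i xbar = 0 → ContDiffOn ℝ 1 (g i) X)
    -- existence of the second-order directional derivatives
    (fdd : Fin n → ℝ) (gdd : Fin m → ℝ)
    (hfdd : ∀ j, HasDirDeriv2 (f j) xbar d (fdd j))
    (hgdd : ∀ i, g i xbar = 0 → HasDirDeriv2 (g i) xbar d (gdd i))
    -- second-order Zangwill constraint qualification
    (hCQ : closure (setA m g xbar d) = setB m g xbar d gdd) :
    ¬ ∃ (u : Fin s → ℝ) (v : ℝ), 0 < v ∧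
        (∀ j, fderiv ℝ (f j) xbar u + v * fdd j < 0) ∧
        (∀ i, g i xbar = 0 → fderiv ℝ (g i) xbar u + v * gdd i ≤ 0) :=
  statement13_general X hX f g xbar d hxX hfeas hmin hcritf hcritg hCont hfC1 hgC1 fdd gdd hfdd hCQ
end
end
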